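/- A well-filtered T0 space is core-compact if and only if it is locally compact. -/

import Mathlib

open Set

def RelCpt {X : Type*} [TopologicalSpace X] (A B : Set X) : Prop :=
  A ⊆ B ∧ ∀ 𝒰 : Set (Set X), (∀ U ∈ 𝒰, IsOpen U) → B ⊆ ⋃₀ 𝒰 →
    ∃ 𝒱 ⊆ 𝒰, 𝒱.Finite ∧ A ⊆ ⋃₀ 𝒱

def Saturated {X : Type*} [TopologicalSpace X] (A : Set X) : Prop :=
  A = ⋂₀ {U : Set X | IsOpen U ∧ A ⊆ U}

def WellFiltered (X : Type*) [TopologicalSpace X] : Prop :=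
  ∀ 𝒦 : Set (Set X), 𝒦.Nonempty →
    (∀ K ∈ 𝒦, IsCompact K ∧ Saturated K) →
    (∀ K₁ ∈ 𝒦, ∀ K₂ ∈ 𝒦, ∃ K₃ ∈ 𝒦, K₃ ⊆ K₁ ∧ K₃ ⊆ K₂) →
    ∀ U : Set X, IsOpen U → ⋂₀ 𝒦 ⊆ U → ∃ K ∈ 𝒦, K ⊆ U

def OmegaWellFiltered (X : Type*) [TopologicalSpace X] : Prop :=
  ∀ K : ℕ → Set X, (∀ n, IsCompact (K n) ∧ Saturated (K n)) →
    (∀ m n : ℕ, ∃ k, K k ⊆ K m ∧ K k ⊆ K n) →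
    ∀ U : Set X, IsOpen U → (⋂ n, K n) ⊆ U → ∃ n, K n ⊆ U

def SatWellFiltered (X : Type*) [TopologicalSpace X] : Prop :=
  ∀ 𝒜 : Set (Set X), 𝒜.Nonempty →
    (∀ A ∈ 𝒜, Saturated A) →
    (∀ A₁ ∈ 𝒜, ∀ A₂ ∈ 𝒜, ∃ A₃ ∈ 𝒜, RelCpt A₃ A₁ ∧ RelCpt A₃ A₂) →
    ∀ U : Set X, IsOpen U → ⋂₀ 𝒜 ⊆ U → ∃ A ∈ 𝒜, A ⊆ U

def SatOmegaWellFiltered (X : Type*) [TopologicalSpace X] : Prop :=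
  ∀ A : ℕ → Set X, (∀ n, Saturated (A n)) →
    (∀ m n : ℕ, ∃ k, RelCpt (A k) (A m) ∧ RelCpt (A k) (A n)) →
    ∀ U : Set X, IsOpen U → (⋂ n, A n) ⊆ U → ∃ n, A n ⊆ U

def OpenWellFiltered (X : Type*) [TopologicalSpace X] : Prop :=
  ∀ 𝒜 : Set (Set X), 𝒜.Nonempty →
    (∀ A ∈ 𝒜, IsOpen A) →
    (∀ A₁ ∈ 𝒜, ∀ A₂ ∈ 𝒜, ∃ A₃ ∈ 𝒜, RelCpt A₃ A₁ ∧ RelCpt A₃ A₂) →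
    ∀ U : Set X, IsOpen U → ⋂₀ 𝒜 ⊆ U → ∃ A ∈ 𝒜, A ⊆ U

def OpenOmegaWellFiltered (X : Type*) [TopologicalSpace X] : Prop :=
  ∀ A : ℕ → Set X, (∀ n, IsOpen (A n)) →
    (∀ m n : ℕ, ∃ k, RelCpt (A k) (A m) ∧ RelCpt (A k) (A n)) →
    ∀ U : Set X, IsOpen U → (⋂ n, A n) ⊆ U → ∃ n, A n ⊆ U

def CoreCompact (X : Type*) [TopologicalSpace X] : Prop :=
  ∀ (x : X) (U : Set X), IsOpen U → x ∈ U → ∃ V : Set X, IsOpen V ∧ x ∈ V ∧ RelCpt V U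

def Sober (X : Type*) [TopologicalSpace X] : Prop :=
  ∀ F : Set X, IsClosed F → F.Nonempty →
    (∀ F₁ F₂ : Set X, IsClosed F₁ → IsClosed F₂ → F ⊆ F₁ ∪ F₂ → F ⊆ F₁ ∨ F ⊆ F₂) →
    ∃! x : X, F = closure {x}

/-!
Compact saturated neighbourhoods are built by interpolation: if `x ∈ V ≪ U` (`RelCpt V U`) in a core-compact
space, there is a chain of open sets `U = W₀ ≫ W₁ ≫ ⋯ ≫ V`, and `Q = ⋂ Wₙ` is saturated with
`V ⊆ Q ⊆ U`. Compactness of `Q` reduces to the fact that in a well-filtered space every open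
`Ω ⊇ ⋂ Wₙ` already contains some `Wₙ`. Were this false, Zorn gives a minimal closed `M ⊆ X ∖ Ω`
meeting every `Wₙ`; for `sₙ ∈ M ∩ Wₙ`, minimality forces `(sₙ)` to converge to every point of
`M`, so the saturations `Kₙ ⊆ Wₙ` of the tails `{sₘ | m ≥ n}` are compact. Well-filteredness
applied to `⋂ Kₙ ⊆ Ω` then puts some `Kₙ`, hence `sₙ ∈ M`, inside `Ω`.
-/

open Filter Topology

section

variable {X : Type*} [TopologicalSpace X] {A B C U V : Set X}

theorem saturated_iff_nhdsKer_eq : Saturated A ↔ nhdsKer A = A := by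
  rw [Saturated, nhdsKer_def, eq_comm]

theorem saturated_iInter_of_isOpen {W : ℕ → Set X} (hW : ∀ n, IsOpen (W n)) :
    Saturated (⋂ n, W n) := by
  refine saturated_iff_nhdsKer_eq.2 (nhdsKer_iInter_subset.trans ?_ |>.antisymm subset_nhdsKer)
  simp only [(hW _).nhdsKer_eq, subset_rfl]

theorem RelCpt.mono_left (h : RelCpt B C) (hAB : A ⊆ B) : RelCpt A C :=
  ⟨hAB.trans h.1, fun 𝒰 hU hC => (h.2 𝒰 hU hC).imp fun _ ⟨h𝒱, hfin, hB⟩ => ⟨h𝒱, hfin, hAB.trans hB⟩⟩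

theorem RelCpt.mono_right (h : RelCpt A B) (hBC : B ⊆ C) : RelCpt A C :=
  ⟨h.1.trans hBC, fun 𝒰 hU hC => h.2 𝒰 hU (hBC.trans hC)⟩

theorem relCpt_empty : RelCpt (∅ : Set X) B :=
  ⟨empty_subset B, fun _ _ _ => ⟨∅, empty_subset _, finite_empty, empty_subset _⟩⟩

theorem RelCpt.union (hA : RelCpt A C) (hB : RelCpt B C) : RelCpt (A ∪ B) C := by
  refine ⟨union_subset hA.1 hB.1, fun 𝒰 hU hC => ?_⟩
  obtain ⟨𝒱, h𝒱, h𝒱fin, hA𝒱⟩ := hA.2 𝒰 hU hC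
  obtain ⟨𝒲, h𝒲, h𝒲fin, hB𝒲⟩ := hB.2 𝒰 hU hC
  exact ⟨𝒱 ∪ 𝒲, union_subset h𝒱 h𝒲, h𝒱fin.union h𝒲fin,
    union_subset_union (hA𝒱.trans (sUnion_mono subset_union_left))
      (hB𝒲.trans (sUnion_mono subset_union_right)) |>.trans (union_self _).subset⟩

theorem relCpt_biUnion {ι : Type*} {A : ι → Set X} (t : Finset ι) (h : ∀ i ∈ t, RelCpt (A i) B) :
    RelCpt (⋃ i ∈ t, A i) B := by
  classical
  induction t using Finset.induction_on with
  | empty => simpa using relCpt_empty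
  | insert i t _ ih =>
    rw [Finset.set_biUnion_insert]
    exact (h i (t.mem_insert_self i)).union (ih fun j hj => h j (Finset.mem_insert_of_mem hj))

theorem IsCompact.relCpt {Q : Set X} (hQ : IsCompact Q) (hAQ : A ⊆ Q) (hQB : Q ⊆ B) :
    RelCpt A B := by
  refine ⟨hAQ.trans hQB, fun 𝒰 hU hB => ?_⟩
  obtain ⟨𝒱, h𝒱, hfin, hQ𝒱⟩ :=
    hQ.elim_finite_subcover_image hU (by rw [← sUnion_eq_biUnion]; exact hQB.trans hB)
  exact ⟨𝒱, h𝒱, hfin, by rw [sUnion_eq_biUnion]; exact hAQ.trans hQ𝒱⟩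

theorem RelCpt.elim_finite_subcover {ι : Type*} (h : RelCpt A B) (U : ι → Set X)
    (hU : ∀ i, IsOpen (U i)) (hB : B ⊆ ⋃ i, U i) : ∃ t : Finset ι, A ⊆ ⋃ i ∈ t, U i := by
  obtain ⟨𝒱, h𝒱, h𝒱fin, hA⟩ := h.2 (range U) (forall_mem_range.2 hU) (by rwa [sUnion_range])
  rw [← image_univ] at h𝒱
  obtain ⟨t, -, htfin, hAt⟩ :=
    exists_subset_image_finite_and (p := fun 𝒱 => A ⊆ ⋃₀ 𝒱) |>.1 ⟨𝒱, h𝒱, h𝒱fin, hA⟩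
  exact ⟨htfin.toFinset, by simpa [sUnion_image] using hAt⟩

theorem RelCpt.inter_iInter_nonempty {ι : Type*} [Nonempty ι] (h : RelCpt B C) {F : ι → Set X}
    (hF : ∀ i, IsClosed (F i)) (hdir : Directed (· ⊇ ·) F) (hFB : ∀ i, (F i ∩ B).Nonempty) :
    ((⋂ i, F i) ∩ C).Nonempty := by
  by_contra hempty
  have hcov : C ⊆ ⋃ i, (F i)ᶜ := by
    intro x hxC
    by_contra hx
    simp only [mem_iUnion, mem_compl_iff, not_exists, not_not] at hx
    exact hempty ⟨x, mem_iInter.2 hx, hxC⟩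
  obtain ⟨t, hBt⟩ := h.elim_finite_subcover _ (fun i => (hF i).isOpen_compl) hcov
  obtain ⟨j, hj⟩ := hdir.finset_le t
  obtain ⟨x, hxF, hxB⟩ := hFB j
  obtain ⟨i, hi, hxi⟩ := mem_iUnion₂.1 (hBt hxB)
  exact hxi (hj i hi hxF)

theorem CoreCompact.exists_isOpen_between (hX : CoreCompact X) (hU : IsOpen U)
    (h : RelCpt V U) : ∃ W, IsOpen W ∧ RelCpt V W ∧ RelCpt W U := by
  choose A hAo hyA hAU using fun y : U => hX y U hU y.2
  choose B hBo hyB hBA using fun y : U => hX y (A y) (hAo y) (hyA y)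
  obtain ⟨t, hVt⟩ :=
    h.elim_finite_subcover B hBo fun y hy => mem_iUnion.2 ⟨⟨y, hy⟩, hyB _⟩
  refine ⟨⋃ y ∈ t, A y, isOpen_biUnion fun y _ => hAo y, ?_, relCpt_biUnion t fun y _ => hAU y⟩
  exact (relCpt_biUnion t fun y hy => (hBA y).mono_right (subset_biUnion_of_mem hy)).mono_left hVt

theorem CoreCompact.exists_relCpt_seq (hX : CoreCompact X) (hU : IsOpen U) (h : RelCpt V U) :
    ∃ W : ℕ → Set X, W 0 = U ∧ (∀ n, IsOpen (W n)) ∧ (∀ n, RelCpt V (W n)) ∧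
      ∀ n, RelCpt (W (n + 1)) (W n) := by
  choose! next hnext_open hnext_rel hnext_sub using
    fun W (h : IsOpen W ∧ RelCpt V W) => hX.exists_isOpen_between h.1 h.2
  have hinv : ∀ n, IsOpen (next^[n] U) ∧ RelCpt V (next^[n] U) := by
    intro n
    induction n with
    | zero => exact ⟨hU, h⟩
    | succ n ih =>
      rw [Function.iterate_succ_apply']
      exact ⟨hnext_open _ ih, hnext_rel _ ih⟩
  refine ⟨fun n => next^[n] U, rfl, fun n => (hinv n).1, fun n => (hinv n).2, fun n => ?_⟩
  simpa only [Function.iterate_succ_apply'] using hnext_sub _ (hinv n)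

theorem WellFiltered.exists_subset_of_antitone (hX : WellFiltered X) {K : ℕ → Set X}
    (hK : Antitone K) (hKc : ∀ n, IsCompact (K n)) (hKs : ∀ n, Saturated (K n)) (hU : IsOpen U)
    (hKU : ⋂ n, K n ⊆ U) : ∃ n, K n ⊆ U := by
  obtain ⟨_, ⟨n, rfl⟩, hn⟩ := hX (range K) (range_nonempty K)
    (forall_mem_range.2 fun n => ⟨hKc n, hKs n⟩)
    (forall_mem_range.2 fun m => forall_mem_range.2 fun n =>
      ⟨K (max m n), mem_range_self _, hK (le_max_left m n), hK (le_max_right m n)⟩)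
    U hU (by rwa [sInter_range])
  exact ⟨n, hn⟩

section RelCptChain

variable {W : ℕ → Set X} (hW : ∀ n, RelCpt (W (n + 1)) (W n))
include hW

theorem antitone_of_relCpt_succ : Antitone W :=
  antitone_nat_of_succ_le fun n => (hW n).1

theorem exists_minimal_isClosed_inter_nonempty {F : Set X} (hF : IsClosed F)
    (hFW : ∀ n, (F ∩ W n).Nonempty) :
    ∃ M ⊆ F, Minimal (fun C => IsClosed C ∧ ∀ n, (C ∩ W n).Nonempty) M := by
  refine zorn_superset_nonempty _ (fun c hc hchain hne => ?_) F ⟨hF, hFW⟩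
  have : Nonempty c := hne.to_subtype
  have hdir : Directed (· ⊇ ·) (fun C : c => (C : Set X)) := fun A B =>
    (hchain.total A.2 B.2).elim (fun h => ⟨A, subset_rfl, h⟩) fun h => ⟨B, h, subset_rfl⟩
  refine ⟨⋂₀ c, ⟨isClosed_sInter fun C hC => (hc hC).1, fun n => ?_⟩,
    fun C hC => sInter_subset_of_mem hC⟩
  rw [sInter_eq_iInter]
  exact (hW n).inter_iInter_nonempty (fun C => (hc C.2).1) hdir fun C => (hc C.2).2 (n + 1)

variable {M : Set X} (hM : Minimal (fun C => IsClosed C ∧ ∀ n, (C ∩ W n).Nonempty) M)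
include hM

theorem subset_closure_range_of_minimal {t : ℕ → X} (ht : ∀ n, t n ∈ M ∩ W n) :
    M ⊆ closure (range t) := by
  set D : ℕ → Set X := fun j => M ∩ closure (t '' Ici j)
  have hDc : ∀ j, IsClosed (D j) := fun j => hM.prop.1.inter isClosed_closure
  have hD : Antitone D := fun i j hij =>
    inter_subset_inter_right _ (closure_mono (image_mono (Ici_subset_Ici.2 hij)))
  have hDW : ∀ n, ((⋂ j, D j) ∩ W n).Nonempty := fun n =>
    (hW n).inter_iInter_nonempty hDc hD.directed_ge fun j =>
      ⟨t (max j (n + 1)), ⟨(ht _).1, subset_closure ⟨_, mem_Ici.2 (le_max_left j (n + 1)), rfl⟩⟩,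
        antitone_of_relCpt_succ hW (le_max_right _ _) (ht _).2⟩
  have hMD : M ⊆ ⋂ j, D j :=
    hM.2 ⟨isClosed_iInter hDc, hDW⟩ ((iInter_subset D 0).trans inter_subset_left)
  exact hMD.trans <| (iInter_subset D 0).trans <|
    inter_subset_right.trans (closure_mono (image_subset_range _ _))

theorem tendsto_of_minimal {s : ℕ → X} (hs : ∀ n, s n ∈ M ∩ W n) {x : X} (hx : x ∈ M) :
    Tendsto s atTop (𝓝 x) := by
  refine tendsto_nhds.2 fun O hO hxO => ?_
  by_contra hnot
  obtain ⟨φ, hφ, hφO⟩ := extraction_of_frequently_atTop (not_eventually.1 hnot)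
  have hMφ : M ⊆ closure (range (s ∘ φ)) := subset_closure_range_of_minimal hW hM fun n =>
    ⟨(hs _).1, antitone_of_relCpt_succ hW (hφ.id_le n) (hs _).2⟩
  exact closure_minimal (range_subset_iff.2 hφO) hO.isClosed_compl (hMφ hx) hxO

omit hM

theorem WellFiltered.exists_subset_of_iInter_subset (hX : WellFiltered X)
    (hWo : ∀ n, IsOpen (W n)) {Ω : Set X} (hΩ : IsOpen Ω) (hWΩ : ⋂ n, W n ⊆ Ω) :
    ∃ n, W n ⊆ Ω := by
  by_contra! hnot
  obtain ⟨M, hMΩ, hM⟩ := exists_minimal_isClosed_inter_nonempty hW hΩ.isClosed_compl fun n =>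
    let ⟨x, hxW, hxΩ⟩ := not_subset.1 (hnot n); ⟨x, hxΩ, hxW⟩
  choose s hs using hM.prop.2
  have hKc : ∀ n, IsCompact (nhdsKer (s '' Ici n)) := by
    intro n
    have htail : insert (s n) (range fun m => s (m + n)) = s '' Ici n := by
      refine (insert_eq_of_mem (mem_range.2 ⟨0, by rw [zero_add]⟩)).trans (subset_antisymm ?_ ?_)
      · exact range_subset_iff.2 fun m => mem_image_of_mem s (mem_Ici.2 le_add_self)
      · rintro _ ⟨m, hm, rfl⟩
        exact ⟨m - n, by simp only [Nat.sub_add_cancel (mem_Ici.1 hm)]⟩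
    rw [← htail]
    exact ((tendsto_of_minimal hW hM hs (hs n).1).comp
      (tendsto_add_atTop_nat n)).isCompact_insert_range.nhdsKer
  have hKW : ∀ n, nhdsKer (s '' Ici n) ⊆ W n := fun n => (hWo n).nhdsKer_subset.2 <|
    image_subset_iff.2 fun m hm => antitone_of_relCpt_succ hW hm (hs m).2
  obtain ⟨n, hn⟩ := hX.exists_subset_of_antitone
    (fun i j hij => nhdsKer_mono (image_mono (Ici_subset_Ici.2 hij))) hKc
    (fun n => saturated_iff_nhdsKer_eq.2 (nhdsKer_nhdsKer _)) hΩ ((iInter_mono hKW).trans hWΩ)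
  exact hMΩ (hs n).1 (hn (subset_nhdsKer (mem_image_of_mem s (mem_Ici.2 le_rfl))))

theorem WellFiltered.isCompact_iInter (hX : WellFiltered X) (hWo : ∀ n, IsOpen (W n)) :
    IsCompact (⋂ n, W n) := by
  refine isCompact_of_finite_subcover fun U hU hcov => ?_
  obtain ⟨n, hn⟩ := hX.exists_subset_of_iInter_subset hW hWo (isOpen_iUnion hU) hcov
  obtain ⟨t, ht⟩ := (hW n).elim_finite_subcover U hU hn
  exact ⟨t, (iInter_subset W (n + 1)).trans ht⟩

end RelCptChain

end

theorem stmt13_general (X : Type*) [TopologicalSpace X] (hwf : WellFiltered X) :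
    CoreCompact X ↔
      ∀ (x : X) (U : Set X), IsOpen U → x ∈ U →
        ∃ W Q : Set X, IsOpen W ∧ IsCompact Q ∧ Saturated Q ∧ x ∈ W ∧ W ⊆ Q ∧ Q ⊆ U := by
  constructor
  · intro hX x U hU hxU
    obtain ⟨V, hV, hxV, hVU⟩ := hX x U hU hxU
    obtain ⟨W, rfl, hWo, hVW, hW⟩ := hX.exists_relCpt_seq hU hVU
    exact ⟨V, ⋂ n, W n, hV, hwf.isCompact_iInter hW hWo, saturated_iInter_of_isOpen hWo, hxV,
      subset_iInter fun n => (hVW n).1, iInter_subset W 0⟩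
  · intro h x U hU hxU
    obtain ⟨W, Q, hW, hQ, -, hxW, hWQ, hQU⟩ := h x U hU hxU
    exact ⟨W, hW, hxW, hQ.relCpt hWQ hQU⟩

/-- A well-filtered space is core-compact iff it is locally compact. -/
theorem stmt13 (X : Type*) [TopologicalSpace X] [T0Space X] (hwf : WellFiltered X) :
    CoreCompact X ↔
      ∀ (x : X) (U : Set X), IsOpen U → x ∈ U →
        ∃ W Q : Set X, IsOpen W ∧ IsCompact Q ∧ Saturated Q ∧ x ∈ W ∧ W ⊆ Q ∧ Q ⊆ U :=
  stmt13_general X hwf
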